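/- PLIS ⊆ PLSIS: every Boolean function family (f_n)_{n∈ℕ} that belongs to PLIS also belongs to PLSIS. -/

import Mathlib

/-- Boolean register names: `inp i` is input register `in:(i+1)`,
`aux i` is auxiliary register `aux:(i+1)`, `out` is the output register. -/
inductive Reg where
  | inp : ℕ → Reg
  | aux : ℕ → Reg
  | out : Reg
deriving DecidableEq

/-- Basic instructions: register reads/writes, and (for splitting instruction
sequences) `split p` and `reply p` for Boolean parameters `p`. -/
inductive BInstr where
  | get : Reg → BInstr
  | set : Reg → Bool → BInstr
  | split : ℕ → BInstr
  | reply : ℕ → BInstr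
deriving DecidableEq

/-- Primitive instructions. -/
inductive PInstr where
  | plain : BInstr → PInstr
  | pos : BInstr → PInstr
  | neg : BInstr → PInstr
  | jump : ℕ → PInstr
  | halt : PInstr
deriving DecidableEq

abbrev RegState := Reg → Bool

/-- State change caused by processing a basic instruction. -/
def BInstr.effect : BInstr → RegState → RegState
  | .set r b, s => Function.update s r b
  | _, s => s

/-- Reply produced by processing a basic instruction. -/
def BInstr.rpl : BInstr → RegState → Bool
  | .get r, s => s r
  | .set _ b, _ => b
  | _, _ => false

def BInstr.isSplitReply : BInstr → Bool
  | .split _ => true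
  | .reply _ => true
  | _ => false

/-- Single-thread execution of an instruction sequence on Boolean registers;
`none` means deadlock, `some s` means termination in register state `s`.
(`split`/`reply` instructions make no sense here and deadlock.) -/
def exec : List PInstr → RegState → Option RegState
  | [], _ => none
  | .plain a :: X, s =>
      if a.isSplitReply then none else exec X (a.effect s)
  | .pos a :: X, s =>
      if a.isSplitReply then none
      else if a.rpl s then exec X (a.effect s) else exec (X.drop 1) (a.effect s)
  | .neg a :: X, s =>
      if a.isSplitReply then none
      else if a.rpl s then exec (X.drop 1) (a.effect s) else exec X (a.effect s)
  | .jump 0 :: _, _ => none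
  | .jump (l+1) :: X, s => exec (X.drop l) s
  | .halt :: _, s => some s
termination_by X _ => X.length
decreasing_by all_goals (simp only [List.length_drop, List.length_cons]; omega)

/-- Initial register state: input registers `in:1 .. in:n` contain
`b 0, ..., b (n-1)`; all other registers contain `false`. -/
def initState (n : ℕ) (b : Fin n → Bool) : RegState := fun r =>
  match r with
  | .inp i => if h : i < n then b ⟨i, h⟩ else false
  | _ => false

/-- `X` computes the `n`-ary Boolean function `f`: for every input, execution
terminates (does not deadlock) with the output register containing `f b`. -/
def Computes {n : ℕ} (f : (Fin n → Bool) → Bool) (X : List PInstr) : Prop :=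
  ∀ b : Fin n → Bool, ∃ s : RegState,
    exec X (initState n b) = some s ∧ s Reg.out = f b

/-- Basic instructions allowed in `IS_br`. -/
def BrBasic : BInstr → Prop
  | .get (.inp _) => True
  | .get (.aux _) => True
  | .set (.aux _) _ => True
  | .set .out _ => True
  | _ => False

/-- Basic instructions allowed in `IS_br^na`. -/
def NaBasic : BInstr → Prop
  | .get (.inp _) => True
  | .set .out _ => True
  | _ => False

def InstrBasicOK (P : BInstr → Prop) : PInstr → Prop
  | .plain a => P a
  | .pos a => P a
  | .neg a => P a
  | _ => True

/-- Membership of `IS_br` (non-empty, only allowed basic instructions). -/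
def ISbr (X : List PInstr) : Prop :=
  X ≠ [] ∧ ∀ u ∈ X, InstrBasicOK BrBasic u

/-- Membership of `IS_br^na`. -/
def ISbrna (X : List PInstr) : Prop :=
  X ≠ [] ∧ ∀ u ∈ X, InstrBasicOK NaBasic u

/-- The primitive instruction contains the basic instruction `out.set:false`. -/
def UsesOutSetFalse : PInstr → Prop
  | .plain (.set .out false) => True
  | .pos (.set .out false) => True
  | .neg (.set .out false) => True
  | _ => False

/-- The class PLIS of Boolean function families computable by
polynomial-length instruction sequences from `IS_br`. -/
def PLIS (F : (n : ℕ) → (Fin n → Bool) → Bool) : Prop :=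
  ∃ h : Polynomial ℕ, ∀ n : ℕ, ∃ X : List PInstr,
    ISbr X ∧ Computes (F n) X ∧ X.length ≤ h.eval n

/-- Basic instructions allowed in `SIS_br`. -/
def SisBasic : BInstr → Prop
  | .get (.inp _) => True
  | .set .out true => True
  | .split _ => True
  | .reply _ => True
  | _ => False

/-- Membership of `SIS_br`. -/
def SISbr (X : List PInstr) : Prop :=
  X ≠ [] ∧ ∀ u ∈ X, InstrBasicOK SisBasic u

/-- A (partial) instantiation of the Boolean parameters. -/
abbrev PEnv := ℕ → Option Bool

/-- Fueled cyclic-interleaving execution of a vector of threads (each a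
remaining instruction sequence with a parameter instantiation) sharing the
Boolean registers.  `none` means deadlock (or not enough fuel), `some s`
means successful termination of all threads in register state `s`. -/
def sexec : ℕ → List (List PInstr × PEnv) → RegState → Option RegState
  | 0, _, _ => none
  | _ + 1, [], s => some s
  | fuel + 1, (is, ρ) :: ts, s =>
    match is with
    | [] => none
    | .halt :: _ => sexec fuel ts s
    | .jump 0 :: _ => none
    | .jump (l+1) :: X => sexec fuel ((X.drop l, ρ) :: ts) s
    | .plain a :: X =>
      match a with
      | .split p =>
        match ρ p with
        | some _ => none
        | none => sexec fuel
            (ts ++ [(X, Function.update ρ p (some true)),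
                    (X, Function.update ρ p (some false))]) s
      | .reply p =>
        match ρ p with
        | none => none
        | some _ => sexec fuel (ts ++ [(X, ρ)]) s
      | _ => sexec fuel (ts ++ [(X, ρ)]) (a.effect s)
    | .pos a :: X =>
      match a with
      | .split p =>
        match ρ p with
        | some _ => none
        | none => sexec fuel
            (ts ++ [(X, Function.update ρ p (some true)),
                    (X.drop 1, Function.update ρ p (some false))]) s
      | .reply p =>
        match ρ p with
        | none => none
        | some b => sexec fuel (ts ++ [(if b then X else X.drop 1, ρ)]) s
      | _ => sexec fuel (ts ++ [(if a.rpl s then X else X.drop 1, ρ)]) (a.effect s)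
    | .neg a :: X =>
      match a with
      | .split p =>
        match ρ p with
        | some _ => none
        | none => sexec fuel
            (ts ++ [(X.drop 1, Function.update ρ p (some true)),
                    (X, Function.update ρ p (some false))]) s
      | .reply p =>
        match ρ p with
        | none => none
        | some b => sexec fuel (ts ++ [(if b then X.drop 1 else X, ρ)]) s
      | _ => sexec fuel (ts ++ [(if a.rpl s then X.drop 1 else X, ρ)]) (a.effect s)

/-- `X` splitting computes the `n`-ary Boolean function `f`. -/
def SplittingComputes {n : ℕ} (f : (Fin n → Bool) → Bool) (X : List PInstr) : Prop :=
  ∀ b : Fin n → Bool, ∃ (fuel : ℕ) (s : RegState),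
    sexec fuel [(X, fun _ => none)] (initState n b) = some s ∧ s Reg.out = f b

/-- The class PLSIS of Boolean function families splitting computable by
polynomial-length instruction sequences from `SIS_br`. -/
def PLSIS (F : (n : ℕ) → (Fin n → Bool) → Bool) : Prop :=
  ∃ h : Polynomial ℕ, ∀ n : ℕ, ∃ X : List PInstr,
    SISbr X ∧ SplittingComputes (F n) X ∧ X.length ≤ h.eval n

/-!
Every auxiliary register tested by `X`, and the output register, is simulated by Boolean
parameters, with a fresh copy `param rs j k` of slot `k` for each position `j` of `X`; since `X`
only jumps forward, no thread instantiates a copy twice. Writing `c` into a fresh parameter `q` is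
`+split(q)` followed by halting the thread whose reply is not `c`; copying `p` into `q` halts the
thread in which the replies of `split(q)` and `reply(p)` differ. So one thread follows the run of
`X`, every other thread halts a few steps after its creation, and the survivor finally sets `out`
iff the simulated output is true. That the cyclic interleaving then terminates with the right output
follows from the per-thread invariant `Safe`, by induction on a weight of the thread vector that
every step decreases. The translation has `|X|` blocks of `O(|X|)` instructions each.
-/
theorem List.drop_mul_flatten {α : Type*} {n : ℕ} {L : List (List α)}
    (hL : ∀ l ∈ L, l.length = n) (d : ℕ) : L.flatten.drop (d * n) = (L.drop d).flatten := by
  induction L generalizing d with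
  | nil => simp
  | cons l L IH =>
    cases d with
    | zero => simp
    | succ d =>
      rw [List.flatten_cons, Nat.succ_mul, add_comm, ← List.drop_drop,
        List.drop_left' (hL l List.mem_cons_self), IH (fun l hl => hL l (.tail _ hl))]
      rfl

theorem List.length_flatten_of_length_eq {α : Type*} {n : ℕ} {L : List (List α)}
    (hL : ∀ l ∈ L, l.length = n) : L.flatten.length = L.length * n := by
  rw [List.length_flatten, List.sum_eq_card_nsmul _ n (by simpa using hL), List.length_map,
    smul_eq_mul]

namespace SplittingSimulation

abbrev Thread := List PInstr × PEnv

-- A split replaces a thread of length `ℓ + 1` by threads of lengths `ℓ` and `ℓ - 1`, and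
-- `3 ^ ℓ + 3 ^ (ℓ - 1) < 3 ^ (ℓ + 1)`.
def weight (ts : List Thread) : ℕ := (ts.map fun t => 3 ^ t.1.length).sum

@[simp] lemma weight_nil : weight [] = 0 := rfl

@[simp] lemma weight_cons (t : Thread) (ts : List Thread) :
    weight (t :: ts) = 3 ^ t.1.length + weight ts := rfl

@[simp] lemma weight_append (ts us : List Thread) : weight (ts ++ us) = weight ts + weight us := by
  simp [weight]

/-- `Safe inp v m X ρ`: against the inputs `inp`, the thread `(X, ρ)` and all threads split off
from it terminate whatever the interleaving and set `out` only if `v = true`; if `m = true`, the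
thread or one of its descendants sets `out` unless `v = false`. -/
inductive Safe (inp : ℕ → Bool) (v : Bool) : Bool → List PInstr → PEnv → Prop where
  | halt {m X ρ} (hm : m = true → v = false) : Safe inp v m (.halt :: X) ρ
  | jump {m X ρ l} (h : Safe inp v m (X.drop l) ρ) : Safe inp v m (.jump (l + 1) :: X) ρ
  | getInp {m X ρ i} (h : Safe inp v m (if inp i then X else X.drop 1) ρ) :
      Safe inp v m (.pos (.get (.inp i)) :: X) ρ
  | setOut {m X ρ} (hv : v = true) (h : Safe inp v false X ρ) :
      Safe inp v m (.plain (.set .out true) :: X) ρ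
  | split {m X ρ p} (mt mf : Bool) (hp : ρ p = none) (hm : m = true → (mt || mf) = true)
      (ht : Safe inp v mt X (Function.update ρ p (some true)))
      (hf : Safe inp v mf (X.drop 1) (Function.update ρ p (some false))) :
      Safe inp v m (.pos (.split p) :: X) ρ
  | reply {m X ρ p} (b : Bool) (hp : ρ p = some b)
      (h : Safe inp v m (if b then X else X.drop 1) ρ) :
      Safe inp v m (.pos (.reply p) :: X) ρ

section Scheduler

variable {inp : ℕ → Bool} {v : Bool} {n : ℕ} {X : List PInstr} {ρ : PEnv} {ts : List Thread}
  {s : RegState}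

def SafeThreads (inp : ℕ → Bool) (v : Bool) (ts : List Thread) : Prop :=
  ∀ t ∈ ts, ∃ m, Safe inp v m t.1 t.2

def Marked (inp : ℕ → Bool) (v : Bool) (ts : List Thread) : Prop :=
  ∃ t ∈ ts, Safe inp v true t.1 t.2

def Terminates (inp : ℕ → Bool) (v : Bool) (ts : List Thread) (s : RegState) : Prop :=
  ∃ fuel s', sexec fuel ts s = some s' ∧ (s .out = true → s' .out = true) ∧
    (s' .out = true → s .out = true ∨ v = true) ∧ (v = true → Marked inp v ts → s' .out = true)

lemma safeThreads_singleton {m : Bool} (h : Safe inp v m X ρ) :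
    SafeThreads inp v [(X, ρ)] := by
  simpa only [SafeThreads, List.mem_singleton, forall_eq] using ⟨m, h⟩

lemma Marked.of_cons {ts' : List Thread}
    (h : Marked inp v ((X, ρ) :: ts)) (hts : ∀ t ∈ ts, t ∈ ts')
    (hX : Safe inp v true X ρ → Marked inp v ts') : Marked inp v ts' := by
  obtain ⟨t, ht, hsafe⟩ := h
  rcases List.mem_cons.mp ht with rfl | ht
  exacts [hX hsafe, ⟨t, hts t ht, hsafe⟩]

lemma Terminates.of_step {ts' : List Thread} (h : Terminates inp v ts' s)
    (hstep : ∀ fuel, sexec (fuel + 1) ts s = sexec fuel ts' s)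
    (hmark : v = true → Marked inp v ts → Marked inp v ts') : Terminates inp v ts s := by
  obtain ⟨fuel, s', hs', hmono, hv, hmarked⟩ := h
  exact ⟨fuel + 1, s', (hstep fuel).trans hs', hmono, hv, fun h hm => hmarked h (hmark h hm)⟩

lemma three_pow_lt_of_le {a b : ℕ} (h : a ≤ b) : 3 ^ a < 3 ^ (b + 1) :=
  Nat.pow_lt_pow_right (by norm_num) (Nat.lt_succ_of_le h)

lemma length_ite_drop_le (b : Bool) (X : List PInstr) :
    (if b then X else X.drop 1).length ≤ X.length := by
  split <;> simp

lemma three_pow_add_three_pow_pred_lt (a : ℕ) : 3 ^ a + 3 ^ (a - 1) < 3 ^ (a + 1) := by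
  rcases a with _ | a
  · norm_num
  · have : 0 < 3 ^ a := Nat.pow_pos (by norm_num)
    rw [Nat.add_sub_cancel, pow_succ 3 (a + 1), pow_succ 3 a]
    omega

lemma Safe.marked_split {p : ℕ}
    (h : Safe inp v true (.pos (.split p) :: X) ρ) :
    Marked inp v
      [(X, Function.update ρ p (some true)), (X.drop 1, Function.update ρ p (some false))] := by
  cases h with
  | split mt mf _ hm ht hf =>
    cases mt
    · obtain rfl : mf = true := by simpa using hm rfl
      exact ⟨_, .tail _ List.mem_cons_self, hf⟩
    · exact ⟨_, List.mem_cons_self, ht⟩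

lemma weight_lt_weight_cons (t : Thread) (ts : List Thread) : weight ts < weight (t :: ts) := by
  have : 0 < 3 ^ t.1.length := Nat.pow_pos (by norm_num)
  rw [weight_cons]
  omega

def TerminatesBelow (inp : ℕ → Bool) (v : Bool) (n : ℕ) : Prop :=
  ∀ ts s, weight ts < n → SafeThreads inp v ts → (∀ i, s (.inp i) = inp i) → Terminates inp v ts s

lemma terminates_cons_of_step {new : List Thread} (IH : TerminatesBelow inp v n)
    (hw : weight ((X, ρ) :: ts) ≤ n) (hts : SafeThreads inp v ts) (hinp : ∀ i, s (.inp i) = inp i)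
    (hnew : SafeThreads inp v new) (hlt : weight new < 3 ^ X.length)
    (hstep : ∀ fuel, sexec (fuel + 1) ((X, ρ) :: ts) s = sexec fuel (ts ++ new) s)
    (hmark : Safe inp v true X ρ → Marked inp v new) : Terminates inp v ((X, ρ) :: ts) s := by
  refine (IH (ts ++ new) s (by simp at hw ⊢; omega) ?_ hinp).of_step hstep fun _ h =>
    h.of_cons (fun _ => List.mem_append_left _) fun hX => ?_
  · exact fun t ht => (List.mem_append.mp ht).elim (hts t) (hnew t)
  · obtain ⟨t, ht, h⟩ := hmark hX
    exact ⟨t, List.mem_append_right _ ht, h⟩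

lemma terminates_jump {m : Bool} {l : ℕ} (IH : TerminatesBelow inp v n)
    (hw : weight ((.jump (l + 1) :: X, ρ) :: ts) ≤ n) (hts : SafeThreads inp v ts)
    (hinp : ∀ i, s (.inp i) = inp i) (h : Safe inp v m (X.drop l) ρ) :
    Terminates inp v ((.jump (l + 1) :: X, ρ) :: ts) s := by
  have hlt := three_pow_lt_of_le (List.drop_sublist l X).length_le
  refine (IH ((X.drop l, ρ) :: ts) s (by simp only [weight_cons, List.length_cons] at hw ⊢; omega)
    ?_ hinp).of_step (fun _ => rfl) fun _ hmark => hmark.of_cons (fun _ => .tail _) fun h => ?_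
  · rintro t (_ | ⟨_, ht⟩)
    exacts [⟨m, h⟩, hts t ht]
  · cases h with | jump h => exact ⟨_, List.mem_cons_self, h⟩

lemma terminates_setOut (IH : TerminatesBelow inp v n)
    (hw : weight ((.plain (.set .out true) :: X, ρ) :: ts) ≤ n) (hts : SafeThreads inp v ts)
    (hinp : ∀ i, s (.inp i) = inp i) (hv : v = true) (h : Safe inp v false X ρ) :
    Terminates inp v ((.plain (.set .out true) :: X, ρ) :: ts) s := by
  have hlt := three_pow_lt_of_le (le_refl X.length)
  obtain ⟨fuel, s', hs', hmono, -, -⟩ := IH (ts ++ [(X, ρ)]) (Function.update s .out true)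
    (by simp at hw ⊢; omega) (fun t ht => (List.mem_append.mp ht).elim (hts t)
      (safeThreads_singleton h t))
    (fun i => by rw [Function.update_of_ne (by simp)]; exact hinp i)
  have hout : s' .out = true := hmono (by simp)
  exact ⟨fuel + 1, s', hs', fun _ => hout, fun _ => .inr hv, fun _ _ => hout⟩

theorem terminates_of_safe (n : ℕ) : TerminatesBelow inp v n := by
  induction n with
  | zero => intro ts s hw; omega
  | succ n IH =>
  rintro (_ | ⟨⟨X, ρ⟩, ts⟩) s hw hsafe hinp
  · exact ⟨1, s, rfl, id, Or.inl, fun _ ⟨_, h, _⟩ => absurd h List.not_mem_nil⟩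
  obtain ⟨m, hX⟩ := hsafe _ List.mem_cons_self
  have hts : SafeThreads inp v ts := fun t ht => hsafe t (.tail _ ht)
  replace hw : weight ((X, ρ) :: ts) ≤ n := Nat.le_of_lt_succ hw
  cases hX with
  | halt hm =>
    refine (IH ts s ((weight_lt_weight_cons _ ts).trans_le hw) hts hinp).of_step (fun _ => rfl)
      fun hv hmark => hmark.of_cons (fun _ => id) fun h => ?_
    cases h with | halt hm' => simp [hm' rfl] at hv
  | jump h => exact terminates_jump IH hw hts hinp h
  | @getInp _ X _ i h =>
    refine terminates_cons_of_step IH hw hts hinp (safeThreads_singleton h)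
      (by simpa using three_pow_lt_of_le (length_ite_drop_le (inp i) X))
      (fun _ => by simp only [sexec, BInstr.rpl, BInstr.effect, hinp]) fun h => ?_
    cases h with | getInp h => exact ⟨_, List.mem_singleton_self _, h⟩
  | setOut hv h => exact terminates_setOut IH hw hts hinp hv h
  | @split _ X _ p mt mf hp hm ht hf =>
    replace hp : ρ p = none := hp
    refine terminates_cons_of_step (new := [(X, Function.update ρ p (some true)),
        (X.drop 1, Function.update ρ p (some false))]) IH hw hts hinp ?_
      (by simpa [add_assoc] using three_pow_add_three_pow_pred_lt X.length)
      (fun _ => by simp only [sexec, hp]) Safe.marked_split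
    simpa only [SafeThreads, List.mem_cons, List.not_mem_nil, or_false, forall_eq_or_imp,
      forall_eq] using ⟨⟨mt, ht⟩, ⟨mf, hf⟩⟩
  | @reply _ X _ p b hp h =>
    replace hp : ρ p = some b := hp
    refine terminates_cons_of_step IH hw hts hinp (safeThreads_singleton h)
      (by simpa using three_pow_lt_of_le (length_ite_drop_le b X))
      (fun _ => by simp only [sexec, hp]) fun h' => ?_
    cases h' with
    | reply b' hp' h' =>
      obtain rfl : b' = b := Option.some_injective _ (hp'.symm.trans hp)
      exact ⟨_, List.mem_singleton_self _, h'⟩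

theorem exists_sexec_of_safe (h : Safe inp v true X ρ) (hinp : ∀ i, s (.inp i) = inp i)
    (hout : s .out = false) :
    ∃ fuel s', sexec fuel [(X, ρ)] s = some s' ∧ s' .out = v := by
  obtain ⟨fuel, s', hs', -, hv, hmarked⟩ := terminates_of_safe (weight [(X, ρ)] + 1) [(X, ρ)] s
    (Nat.lt_succ_self _) (safeThreads_singleton h) hinp
  refine ⟨fuel, s', hs', ?_⟩
  cases v
  · simpa [hout] using hv
  · exact hmarked rfl ⟨_, List.mem_singleton_self _, h⟩

end Scheduler

section Translation

def numSlots (rs : List ℕ) : ℕ := rs.length + 1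

def slotReg (rs : List ℕ) (k : ℕ) : Reg := if h : k < rs.length then .aux rs[k] else .out

/-- `param rs j k` holds the content of slot `k` on arrival at position `j` of `X`. -/
def param (rs : List ℕ) (j k : ℕ) : ℕ := j * numSlots rs + k

def setParam (c : Bool) (q : ℕ) : List PInstr :=
  if c then [.pos (.split q), .jump 7, .halt, .halt, .halt, .halt, .halt, .halt]
  else [.pos (.split q), .halt, .jump 6, .halt, .halt, .halt, .halt, .halt]

def copyParam (q p : ℕ) : List PInstr :=
  [.pos (.split q), .jump 4, .pos (.reply p), .halt, .jump 4, .pos (.reply p), .jump 2, .halt]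

def applyWrite : Option (Reg × Bool) → RegState → RegState
  | none, s => s
  | some (r, c), s => Function.update s r c

def writtenValue : Option (Reg × Bool) → Reg → Option Bool
  | none, _ => none
  | some (r, c), r' => if r = r' then some c else none

def slotGadget (rs : List ℕ) (j t : ℕ) (w : Option (Reg × Bool)) (k : ℕ) : List PInstr :=
  match writtenValue w (slotReg rs k) with
  | some c => setParam c (param rs t k)
  | none => copyParam (param rs t k) (param rs j k)

def blockLen (rs : List ℕ) : ℕ := 16 * numSlots rs + 4

/-- Meant for offset `o` of block `j`: its final jump lands at the start of block `t`. -/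
def transfer (rs : List ℕ) (j t : ℕ) (w : Option (Reg × Bool)) (o : ℕ) : List PInstr :=
  (List.range (numSlots rs)).flatMap (slotGadget rs j t w) ++
    [.jump ((t - j) * blockLen rs - o - 8 * numSlots rs)]

inductive Desc where
  | step : Option (Reg × Bool) → ℕ → Desc
  | branch : Reg → ℕ → ℕ → Desc
  | halt : Desc
  | dead : Desc

def descOf (j : ℕ) : PInstr → Desc
  | .plain (.get _) => .step none (j + 1)
  | .plain (.set r c) => .step (some (r, c)) (j + 1)
  | .pos (.get r) => .branch r (j + 1) (j + 2)
  | .neg (.get r) => .branch r (j + 2) (j + 1)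
  | .pos (.set r c) => .step (some (r, c)) (if c then j + 1 else j + 2)
  | .neg (.set r c) => .step (some (r, c)) (if c then j + 2 else j + 1)
  | .jump (l + 1) => .step none (j + 1 + l)
  | .halt => .halt
  | _ => .dead

def testInstr (rs : List ℕ) (j : ℕ) : Reg → PInstr
  | .inp i => .pos (.get (.inp i))
  | .aux i => .pos (.reply (param rs j (rs.idxOf i)))
  | .out => .pos (.reply (param rs j rs.length))

/-- On a true reply to the test of a branch block, the jump over the first transfer leads to the
second one (to `tT`); a false reply skips that jump. -/
def block (rs : List ℕ) (j : ℕ) : Desc → List PInstr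
  | .step w t => .jump (8 * numSlots rs + 3) :: List.replicate (8 * numSlots rs + 2) .halt ++
      transfer rs j t w (8 * numSlots rs + 3)
  | .branch r tT tF => [testInstr rs j r, .jump (8 * numSlots rs + 2)] ++
      transfer rs j tF none 2 ++ transfer rs j tT none (8 * numSlots rs + 3)
  | .halt => [.pos (.reply (param rs j rs.length)), .plain (.set .out true)] ++
      List.replicate (blockLen rs - 2) .halt
  | .dead => List.replicate (blockLen rs) .halt

def blocks (rs : List ℕ) (X : List PInstr) : List (List PInstr) :=
  X.mapIdx fun j u => block rs j (descOf j u)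

def codeFrom (rs : List ℕ) (X : List PInstr) (j : ℕ) : List PInstr :=
  ((blocks rs X).drop j).flatten

def prologue (rs : List ℕ) : List PInstr :=
  (List.range (numSlots rs)).flatMap fun k => setParam false (param rs 0 k)

-- Only the registers that `X` tests need slots: writes to other auxiliary registers are dropped.
def readAux : PInstr → List ℕ
  | .pos (.get (.aux i)) => [i]
  | .neg (.get (.aux i)) => [i]
  | _ => []

def auxRegs (X : List PInstr) : List ℕ := X.flatMap readAux

def transl (X : List PInstr) : List PInstr :=
  prologue (auxRegs X) ++ (blocks (auxRegs X) X).flatten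

end Translation

section Execution

lemma applyWrite_of_writtenValue {w : Option (Reg × Bool)} {r : Reg} (s : RegState) :
    applyWrite w s r = (writtenValue w r).getD (s r) := by
  rcases w with _ | ⟨r', c⟩
  · rfl
  · by_cases h : r' = r
    · subst h; simp [applyWrite, writtenValue]
    · simp [applyWrite, writtenValue, h, Function.update_of_ne (Ne.symm h)]

def Desc.Exec (X : List PInstr) (j : ℕ) (s sf : RegState) : Desc → Prop
  | .step w t => j < t ∧ (∀ i, applyWrite w s (.inp i) = s (.inp i)) ∧
      exec (X.drop t) (applyWrite w s) = some sf
  | .branch r tT tF => j < tT ∧ j < tF ∧ exec (X.drop (if s r then tT else tF)) s = some sf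
  | .halt => sf = s
  | .dead => False

lemma applyWrite_set_inp {r : Reg} {c : Bool} (hr : BrBasic (.set r c)) (s : RegState) (i : ℕ) :
    applyWrite (some (r, c)) s (.inp i) = s (.inp i) := by
  cases r <;> simp_all [BrBasic, applyWrite]

lemma descOf_exec {X : List PInstr} {j : ℕ} {u : PInstr} {s sf : RegState}
    (hbr : InstrBasicOK BrBasic u) (h : exec (u :: X.drop (j + 1)) s = some sf) :
    (descOf j u).Exec X j s sf := by
  have hdrop : ∀ l, (X.drop (j + 1)).drop l = X.drop (j + 1 + l) := fun _ => List.drop_drop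
  have hdrop1 : (X.drop (j + 1)).drop 1 = X.drop (j + 2) := List.drop_drop
  cases u with
  | plain a =>
    cases a with
    | get r => exact ⟨by omega, fun _ => rfl, by simpa [exec, BInstr.isSplitReply,
        BInstr.effect, applyWrite] using h⟩
    | set r c => exact ⟨by omega, applyWrite_set_inp hbr s, by simpa [exec,
        BInstr.isSplitReply, BInstr.effect, applyWrite] using h⟩
    | split | reply => simp [exec, BInstr.isSplitReply] at h
  | pos a | neg a =>
    cases a with
    | get r => exact ⟨by omega, by omega, by cases hs : s r <;> simpa [exec,
        BInstr.isSplitReply, BInstr.rpl, BInstr.effect, hs, hdrop1] using h⟩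
    | set r c => exact ⟨by split <;> omega, applyWrite_set_inp hbr s, by cases c <;> simpa [exec,
        BInstr.isSplitReply, BInstr.rpl, BInstr.effect, applyWrite, hdrop1] using h⟩
    | split | reply => simp [exec, BInstr.isSplitReply] at h
  | jump l =>
    cases l with
    | zero => simp [exec] at h
    | succ l => exact ⟨by omega, fun _ => rfl, by simpa [exec, applyWrite, hdrop] using h⟩
  | halt => simpa [exec, descOf, Desc.Exec, eq_comm] using h

lemma lt_length_of_exec_drop {X : List PInstr} {j : ℕ} {s sf : RegState}
    (h : exec (X.drop j) s = some sf) : j < X.length := by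
  by_contra hj
  rw [List.drop_eq_nil_of_le (by omega)] at h
  simp [exec] at h

lemma mem_auxRegs {X : List PInstr} {u : PInstr} {j i tT tF : ℕ} (hu : u ∈ X)
    (h : descOf j u = .branch (.aux i) tT tF) : i ∈ auxRegs X := by
  refine List.mem_flatMap.mpr ⟨u, hu, ?_⟩
  unfold descOf at h
  split at h <;> simp_all [readAux]

end Execution

section Layout

@[simp] lemma setParam_length (c : Bool) (q : ℕ) : (setParam c q).length = 8 := by
  cases c <;> rfl

@[simp] lemma slotGadget_length (rs : List ℕ) (j t : ℕ) (w : Option (Reg × Bool)) (k : ℕ) :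
    (slotGadget rs j t w k).length = 8 := by
  unfold slotGadget; split <;> simp [copyParam]

@[simp] lemma transfer_length (rs : List ℕ) (j t : ℕ) (w : Option (Reg × Bool)) (o : ℕ) :
    (transfer rs j t w o).length = 8 * numSlots rs + 1 := by
  simp [transfer, List.length_flatMap, mul_comm]

@[simp] lemma block_length (rs : List ℕ) (j : ℕ) (d : Desc) :
    (block rs j d).length = blockLen rs := by
  cases d <;> simp [block, blockLen] <;> omega

lemma length_of_mem_blocks {rs : List ℕ} {X : List PInstr} {b : List PInstr}
    (hb : b ∈ blocks rs X) : b.length = blockLen rs := by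
  obtain ⟨i, hi, rfl⟩ := List.mem_mapIdx.mp hb
  exact block_length _ _ _

lemma codeFrom_drop (rs : List ℕ) (X : List PInstr) (j d : ℕ) :
    (codeFrom rs X j).drop (d * blockLen rs) = codeFrom rs X (j + d) := by
  rw [codeFrom, List.drop_mul_flatten (fun b hb => length_of_mem_blocks (List.mem_of_mem_drop hb)),
    List.drop_drop, codeFrom]

lemma codeFrom_eq_block_append {rs : List ℕ} {X : List PInstr} {j : ℕ} (hj : j < X.length) :
    codeFrom rs X j = block rs j (descOf j X[j]) ++ codeFrom rs X (j + 1) := by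
  rw [codeFrom, List.drop_eq_getElem_cons (by simpa [blocks] using hj)]
  simp [blocks, codeFrom]

end Layout

section Representation

variable {rs : List ℕ}

def instantiate (rs : List ℕ) (ρ : PEnv) (t : ℕ) (s : RegState) : ℕ → PEnv
  | 0 => ρ
  | a + 1 => Function.update (instantiate rs ρ t s a) (param rs t a) (some (s (slotReg rs a)))

lemma instantiate_of_not_mem {ρ : PEnv} {t : ℕ} {s : RegState} {a p : ℕ}
    (hp : p < t * numSlots rs ∨ t * numSlots rs + a ≤ p) : instantiate rs ρ t s a p = ρ p := by
  induction a with
  | zero => rfl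
  | succ a IH =>
    rw [instantiate, Function.update_of_ne (by unfold param; omega), IH (by omega)]

lemma instantiate_param {ρ : PEnv} {t : ℕ} {s : RegState} {a k : ℕ} (hk : k < a) :
    instantiate rs ρ t s a (param rs t k) = some (s (slotReg rs k)) := by
  induction a with
  | zero => omega
  | succ a IH =>
    rcases (Nat.lt_succ_iff_lt_or_eq.mp hk) with hk | rfl
    · rw [instantiate, Function.update_of_ne (by unfold param; omega), IH hk]
    · exact Function.update_self ..

structure Represents (rs : List ℕ) (j : ℕ) (s : RegState) (ρ : PEnv) : Prop where
  cur : ∀ k < numSlots rs, ρ (param rs j k) = some (s (slotReg rs k))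
  fresh : ∀ p, (j + 1) * numSlots rs ≤ p → ρ p = none

lemma represents_instantiate_zero (s : RegState) :
    Represents rs 0 s (instantiate rs (fun _ => none) 0 s (numSlots rs)) where
  cur _ hk := instantiate_param hk
  fresh _ hp := instantiate_of_not_mem (by omega)

lemma Represents.instantiate {j t : ℕ} {s s' : RegState} {ρ : PEnv} (h : Represents rs j s ρ)
    (hjt : j < t) : Represents rs t s' (instantiate rs ρ t s' (numSlots rs)) where
  cur _ hk := instantiate_param hk
  fresh p hp := by
    have hjt' : (j + 1) * numSlots rs ≤ t * numSlots rs := Nat.mul_le_mul_right _ hjt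
    rw [add_one_mul] at hp
    rw [instantiate_of_not_mem (by omega)]
    exact h.fresh p (by omega)

end Representation

section Simulation

variable {inp : ℕ → Bool} {v m : Bool} {rs : List ℕ}

lemma safe_setParam {c : Bool} {q : ℕ} {tail : List PInstr} {ρ : PEnv} (hq : ρ q = none)
    (h : Safe inp v m tail (Function.update ρ q (some c))) :
    Safe inp v m (setParam c q ++ tail) ρ := by
  cases c
  · refine .split false m hq (by simp) (.halt (by simp)) (.jump ?_)
    simpa using h
  · refine .split m false hq (by simp) (.jump ?_) (.halt (by simp))
    simpa using h

lemma safe_copyParam {q p : ℕ} {c : Bool} {tail : List PInstr} {ρ : PEnv} (hqp : q ≠ p)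
    (hq : ρ q = none) (hp : ρ p = some c) (h : Safe inp v m tail (Function.update ρ q (some c))) :
    Safe inp v m (copyParam q p ++ tail) ρ := by
  have hp' : ∀ b, Function.update ρ q (some b) p = some c := fun b => by
    rw [Function.update_of_ne hqp.symm, hp]
  cases c
  · refine .split false m hq (by simp) (.jump (.reply false (hp' true) (.halt (by simp))))
      (.reply false (hp' false) (.jump ?_))
    simpa using h
  · refine .split m false hq (by simp) (.jump (.reply true (hp' true) (.jump ?_)))
      (.reply true (hp' false) (.halt (by simp)))
    simpa using h

lemma safe_flatMap_range_append {g : ℕ → List PInstr} {ρ : ℕ → PEnv} {n : ℕ} {tail : List PInstr}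
    (hg : ∀ a < n, ∀ tail, Safe inp v m tail (ρ (a + 1)) → Safe inp v m (g a ++ tail) (ρ a))
    (h : Safe inp v m tail (ρ n)) : Safe inp v m ((List.range n).flatMap g ++ tail) (ρ 0) := by
  induction n generalizing tail with
  | zero => simpa using h
  | succ n IH =>
    rw [List.range_succ, List.flatMap_append, List.append_assoc, List.flatMap_singleton]
    exact IH (fun a ha => hg a (by omega)) (hg n (by omega) tail h)

lemma safe_slotGadget {j t a : ℕ} {w : Option (Reg × Bool)} {s : RegState} {ρ : PEnv}
    {tail : List PInstr} (hρ : Represents rs j s ρ) (hjt : j < t) (ha : a < numSlots rs)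
    (h : Safe inp v m tail (instantiate rs ρ t (applyWrite w s) (a + 1))) :
    Safe inp v m (slotGadget rs j t w a ++ tail) (instantiate rs ρ t (applyWrite w s) a) := by
  have hle : j * numSlots rs + numSlots rs ≤ t * numSlots rs := by
    simpa [add_mul] using Nat.mul_le_mul_right (numSlots rs) hjt
  have hfresh : instantiate rs ρ t (applyWrite w s) a (param rs t a) = none := by
    rw [instantiate_of_not_mem (by unfold param; omega)]
    exact hρ.fresh _ (by unfold param; rw [add_mul]; omega)
  rw [instantiate, applyWrite_of_writtenValue] at h
  unfold slotGadget
  split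
  next c hc =>
    rw [hc] at h
    exact safe_setParam hfresh h
  next hc =>
    rw [hc] at h
    refine safe_copyParam (by unfold param; omega) hfresh ?_ h
    rw [instantiate_of_not_mem (by unfold param; omega)]
    exact hρ.cur a ha

lemma safe_transfer {j t o : ℕ} {w : Option (Reg × Bool)} {s : RegState} {ρ : PEnv}
    {tail : List PInstr} (hρ : Represents rs j s ρ) (hjt : j < t)
    (ho : o + 8 * numSlots rs < (t - j) * blockLen rs)
    (h : Safe inp v m (tail.drop ((t - j) * blockLen rs - o - 8 * numSlots rs - 1))
      (instantiate rs ρ t (applyWrite w s) (numSlots rs))) :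
    Safe inp v m (transfer rs j t w o ++ tail) ρ := by
  rw [transfer, List.append_assoc]
  refine safe_flatMap_range_append (ρ := instantiate rs ρ t (applyWrite w s))
    (fun a ha tail h => safe_slotGadget hρ hjt ha h) ?_
  obtain ⟨d, hd⟩ : ∃ d, (t - j) * blockLen rs - o - 8 * numSlots rs = d + 1 :=
    ⟨(t - j) * blockLen rs - o - 8 * numSlots rs - 1, by omega⟩
  rw [List.singleton_append, hd]
  exact .jump (by simpa [hd] using h)

lemma sub_mul_blockLen {j t : ℕ} (hjt : j < t) :
    (t - j) * blockLen rs = (t - (j + 1)) * blockLen rs + 16 * numSlots rs + 4 := by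
  rw [show t - j = t - (j + 1) + 1 by omega, Nat.succ_mul, blockLen, add_assoc]

lemma safe_transfer_codeFrom {X : List PInstr} {j t : ℕ} {w : Option (Reg × Bool)} {s : RegState}
    {ρ : PEnv} (hρ : Represents rs j s ρ) (hjt : j < t)
    (h : Safe inp v m (codeFrom rs X t) (instantiate rs ρ t (applyWrite w s) (numSlots rs))) :
    Safe inp v m (transfer rs j t w (8 * numSlots rs + 3) ++ codeFrom rs X (j + 1)) ρ := by
  have hB := sub_mul_blockLen (rs := rs) hjt
  refine safe_transfer hρ hjt (by omega) ?_
  rwa [show (t - j) * blockLen rs - (8 * numSlots rs + 3) - 8 * numSlots rs - 1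
      = (t - (j + 1)) * blockLen rs by omega, codeFrom_drop,
    show j + 1 + (t - (j + 1)) = t by omega]

lemma safe_transfer_skip_codeFrom {X T : List PInstr} {j t : ℕ} {s : RegState} {ρ : PEnv}
    (hT : T.length = 8 * numSlots rs + 1) (hρ : Represents rs j s ρ) (hjt : j < t)
    (h : Safe inp v m (codeFrom rs X t) (instantiate rs ρ t s (numSlots rs))) :
    Safe inp v m (transfer rs j t none 2 ++ (T ++ codeFrom rs X (j + 1))) ρ := by
  have hB := sub_mul_blockLen (rs := rs) hjt
  refine safe_transfer (w := none) hρ hjt (by omega) ?_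
  rwa [show (t - j) * blockLen rs - 2 - 8 * numSlots rs - 1
      = T.length + (t - (j + 1)) * blockLen rs by omega, ← List.drop_drop, List.drop_left,
    codeFrom_drop, show j + 1 + (t - (j + 1)) = t by omega]

lemma safe_block_step {X : List PInstr} {j t : ℕ} {w : Option (Reg × Bool)} {s : RegState}
    {ρ : PEnv} (hρ : Represents rs j s ρ) (hjt : j < t)
    (h : Safe inp v m (codeFrom rs X t) (instantiate rs ρ t (applyWrite w s) (numSlots rs))) :
    Safe inp v m (block rs j (.step w t) ++ codeFrom rs X (j + 1)) ρ := by
  rw [block, List.cons_append]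
  refine .jump ?_
  rw [List.append_eq, List.append_assoc, List.drop_left' List.length_replicate]
  exact safe_transfer_codeFrom hρ hjt h

lemma slotReg_idxOf {i : ℕ} (hi : i ∈ rs) : slotReg rs (rs.idxOf i) = .aux i := by
  have h := List.idxOf_lt_length_iff.mpr hi
  rw [slotReg, dif_pos h, List.getElem_idxOf h]

lemma slotReg_length : slotReg rs rs.length = .out := dif_neg (lt_irrefl _)

lemma safe_testInstr {j : ℕ} {r : Reg} {s : RegState} {ρ : PEnv} {Y : List PInstr}
    (hρ : Represents rs j s ρ) (hinp : ∀ i, s (.inp i) = inp i) (hr : ∀ i, r = .aux i → i ∈ rs)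
    (h : Safe inp v m (if s r then Y else Y.drop 1) ρ) :
    Safe inp v m (testInstr rs j r :: Y) ρ := by
  cases r with
  | inp i => exact .getInp (by rwa [← hinp i])
  | aux i =>
    refine .reply _ ?_ h
    rw [hρ.cur _ (by have := List.idxOf_lt_length_iff.mpr (hr i rfl); unfold numSlots; omega),
      slotReg_idxOf (hr i rfl)]
  | out => exact .reply _ (by rw [hρ.cur _ (by unfold numSlots; omega), slotReg_length]) h

lemma safe_block_branch {X : List PInstr} {j tT tF : ℕ} {r : Reg} {s : RegState} {ρ : PEnv}
    (hρ : Represents rs j s ρ) (hinp : ∀ i, s (.inp i) = inp i) (hr : ∀ i, r = .aux i → i ∈ rs)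
    (hjT : j < tT) (hjF : j < tF)
    (h : Safe inp v m (codeFrom rs X (if s r then tT else tF))
      (instantiate rs ρ (if s r then tT else tF) s (numSlots rs))) :
    Safe inp v m (block rs j (.branch r tT tF) ++ codeFrom rs X (j + 1)) ρ := by
  simp only [block, List.append_assoc, List.cons_append, List.nil_append]
  refine safe_testInstr hρ hinp hr ?_
  cases hs : s r <;> rw [hs] at h <;> simp only [Bool.false_eq_true, if_false, if_true]
  · exact safe_transfer_skip_codeFrom (transfer_length ..) hρ hjF h
  · refine .jump ?_
    rw [List.drop_left' (transfer_length ..)]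
    exact safe_transfer_codeFrom (w := none) hρ hjT h

lemma safe_block_halt {j : ℕ} {s : RegState} {ρ : PEnv} {tail : List PInstr}
    (hout : ρ (param rs j rs.length) = some (s .out)) :
    Safe inp (s .out) true (block rs j .halt ++ tail) ρ := by
  rw [block, show blockLen rs - 2 = 16 * numSlots rs + 1 + 1 by unfold blockLen; omega,
    List.replicate_succ]
  refine .reply _ hout ?_
  cases s .out
  · exact .halt fun _ => rfl
  · exact .setOut rfl (.halt (by simp))

lemma safe_prologue {s : RegState} {tail : List PInstr} (hs : ∀ k, s (slotReg rs k) = false)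
    (h : Safe inp v m tail (instantiate rs (fun _ => none) 0 s (numSlots rs))) :
    Safe inp v m (prologue rs ++ tail) (fun _ => none) :=
  safe_flatMap_range_append (ρ := instantiate rs (fun _ => none) 0 s)
    (fun a _ tail h => safe_setParam (instantiate_of_not_mem (by unfold param; omega))
      (by rwa [instantiate, hs] at h)) h

theorem safe_codeFrom {X : List PInstr} (hX : ∀ u ∈ X, InstrBasicOK BrBasic u) {sf : RegState}
    (j : ℕ) (s : RegState) (ρ : PEnv) (h : exec (X.drop j) s = some sf)
    (hinp : ∀ i, s (.inp i) = inp i) (hρ : Represents (auxRegs X) j s ρ) :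
    Safe inp (sf .out) true (codeFrom (auxRegs X) X j) ρ := by
  have hj : j < X.length := lt_length_of_exec_drop h
  rw [List.drop_eq_getElem_cons hj] at h
  have hd := descOf_exec (hX _ (List.getElem_mem hj)) h
  rw [codeFrom_eq_block_append hj]
  cases hdesc : descOf j X[j] with rw [hdesc] at hd
  | step w t =>
    obtain ⟨hjt, hwinp, hnext⟩ := hd
    exact safe_block_step hρ hjt (safe_codeFrom hX t _ _ hnext (fun i => (hwinp i).trans (hinp i))
      (hρ.instantiate hjt))
  | branch r tT tF =>
    obtain ⟨hjT, hjF, hnext⟩ := hd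
    exact safe_block_branch hρ hinp (fun i hi => mem_auxRegs (List.getElem_mem hj) (hi ▸ hdesc))
      hjT hjF (safe_codeFrom hX _ s _ hnext hinp (hρ.instantiate (by split <;> assumption)))
  | halt =>
    subst hd
    exact safe_block_halt (by rw [hρ.cur _ (by unfold numSlots; omega), slotReg_length])
  | dead => exact hd.elim
termination_by X.length - j
decreasing_by all_goals (try split) <;> omega

end Simulation

section Correctness

lemma initState_slotReg (n : ℕ) (b : Fin n → Bool) (rs : List ℕ) (k : ℕ) :
    initState n b (slotReg rs k) = false := by
  unfold slotReg; split <;> rfl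

theorem transl_splittingComputes {n : ℕ} {f : (Fin n → Bool) → Bool} {X : List PInstr}
    (hX : ∀ u ∈ X, InstrBasicOK BrBasic u) (hc : Computes f X) :
    SplittingComputes f (transl X) := by
  intro b
  obtain ⟨sf, hsf, hout⟩ := hc b
  have hsafe : Safe (fun i => initState n b (.inp i)) (sf .out) true (transl X) fun _ => none :=
    safe_prologue (initState_slotReg n b _) (safe_codeFrom hX 0 _ _ (by simpa using hsf)
      (fun _ => rfl) (represents_instantiate_zero _))
  obtain ⟨fuel, s', hs', hs'out⟩ := exists_sexec_of_safe hsafe (fun _ => rfl) rfl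
  exact ⟨fuel, s', hs', hs'out.trans hout⟩

lemma sisBasic_setParam (c : Bool) (q : ℕ) : ∀ u ∈ setParam c q, InstrBasicOK SisBasic u := by
  cases c <;> simp [setParam, InstrBasicOK, SisBasic]

lemma sisBasic_copyParam (q p : ℕ) : ∀ u ∈ copyParam q p, InstrBasicOK SisBasic u := by
  simp [copyParam, InstrBasicOK, SisBasic]

lemma sisBasic_transfer (rs : List ℕ) (j t : ℕ) (w : Option (Reg × Bool)) (o : ℕ) :
    ∀ u ∈ transfer rs j t w o, InstrBasicOK SisBasic u := by
  simp only [transfer, List.mem_append, List.mem_flatMap, List.mem_singleton]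
  rintro u (⟨k, -, hu⟩ | rfl)
  · unfold slotGadget at hu
    split at hu
    exacts [sisBasic_setParam _ _ u hu, sisBasic_copyParam _ _ u hu]
  · trivial

lemma sisBasic_block (rs : List ℕ) (j : ℕ) (d : Desc) :
    ∀ u ∈ block rs j d, InstrBasicOK SisBasic u := by
  have hT := sisBasic_transfer rs j
  cases d with
  | step w t =>
    simp only [block, List.cons_append, List.mem_cons, List.mem_append, List.mem_replicate]
    rintro u (rfl | ⟨-, rfl⟩ | hu)
    exacts [trivial, trivial, hT _ _ _ u hu]
  | branch r tT tF =>
    simp only [block, List.cons_append, List.mem_cons, List.mem_append, List.nil_append]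
    rintro u (rfl | rfl | hu | hu)
    · cases r <;> trivial
    exacts [trivial, hT _ _ _ u hu, hT _ _ _ u hu]
  | halt =>
    simp only [block, List.cons_append, List.nil_append, List.mem_cons, List.mem_replicate]
    rintro u (rfl | rfl | ⟨-, rfl⟩) <;> trivial
  | dead =>
    simp only [block, List.mem_replicate]
    rintro u ⟨-, rfl⟩
    trivial

lemma length_transl (X : List PInstr) :
    (transl X).length = 8 * numSlots (auxRegs X) + X.length * blockLen (auxRegs X) := by
  rw [transl, List.length_append, List.length_flatten_of_length_eq fun _ => length_of_mem_blocks]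
  simp [prologue, blocks, List.length_flatMap, mul_comm]

theorem transl_SISbr (X : List PInstr) : SISbr (transl X) := by
  refine ⟨List.ne_nil_of_length_pos (by rw [length_transl]; unfold numSlots; omega), ?_⟩
  simp only [transl, prologue, blocks, List.mem_append, List.mem_flatMap, List.mem_flatten,
    List.mem_mapIdx]
  rintro u (⟨k, -, hu⟩ | ⟨-, ⟨j, hj, rfl⟩, hu⟩)
  exacts [sisBasic_setParam _ _ u hu, sisBasic_block _ _ _ u hu]

lemma length_auxRegs_le (X : List PInstr) : (auxRegs X).length ≤ X.length := by
  induction X with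
  | nil => rfl
  | cons u X IH =>
    have : (readAux u).length ≤ 1 := by unfold readAux; split <;> simp
    simp only [auxRegs, List.flatMap_cons, List.length_append, List.length_cons] at IH ⊢
    omega

lemma length_transl_le (X : List PInstr) :
    (transl X).length ≤ 16 * X.length ^ 2 + 28 * X.length + 8 := by
  have h := length_auxRegs_le X
  rw [length_transl, blockLen, numSlots]
  nlinarith

end Correctness

end SplittingSimulation

/-- Theorem 8 of the paper: PLIS ⊆ PLSIS. -/
theorem statement6 (F : (n : ℕ) → (Fin n → Bool) → Bool) (h : PLIS F) :
    PLSIS F := by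
  obtain ⟨p, hp⟩ := h
  refine ⟨16 * p ^ 2 + 28 * p + 8, fun n => ?_⟩
  obtain ⟨X, hX, hc, hlen⟩ := hp n
  refine ⟨SplittingSimulation.transl X, SplittingSimulation.transl_SISbr X,
    SplittingSimulation.transl_splittingComputes hX.2 hc, ?_⟩
  have := SplittingSimulation.length_transl_le X
  simp only [Polynomial.eval_add, Polynomial.eval_mul, Polynomial.eval_pow, Polynomial.eval_ofNat]
  nlinarith
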